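/- (Lemma 1) Suppose that no dessin D ∈ 𝒟 is its own descendant, where D₁ is called a son ('fils') of D if D₁ ≠ D and ∂_{T(D)} ∂_{S(D₁)} Δ_μ is a nonzero constant, and 'descendant' is the transitive closure of the son relation. Then the family {∂_{S(D)} Δ_μ : D ∈ 𝒟} is linearly independent over ℚ. -/

import Mathlib

open MvPolynomial

noncomputable section

/-- Partial derivatives with respect to two variables commute. -/
lemma pderiv_pderiv_comm {σ : Type*} (i j : σ) (f : MvPolynomial σ ℚ) :
    pderiv i (pderiv j f) = pderiv j (pderiv i f) := by
  classical
  rcases eq_or_ne i j with rfl | hij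
  · rfl
  · induction f using MvPolynomial.induction_on' with
    | monomial s a =>
      simp only [pderiv_monomial, Finsupp.coe_tsub, Pi.sub_apply, Finsupp.single_apply,
        if_neg hij, if_neg (Ne.symm hij), Nat.sub_zero]
      rw [tsub_tsub, tsub_tsub, add_comm, mul_right_comm]
    | add p q hp hq => simp [hp, hq]

lemma pderiv_commute {σ : Type*} (i j : σ) :
    Commute ((pderiv i).toLinearMap : Module.End ℚ (MvPolynomial σ ℚ))
      (pderiv j).toLinearMap := by
  apply LinearMap.ext
  intro f
  simpa only [Module.End.mul_apply, Derivation.coeFn_coe] using pderiv_pderiv_comm i j f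

/-- The monomial differential operator `∂^d = ∏ᵢ (∂/∂zᵢ)^(dᵢ)`. -/
def Dmon {σ : Type*} [DecidableEq σ] (d : σ →₀ ℕ) :
    Module.End ℚ (MvPolynomial σ ℚ) :=
  d.support.noncommProd
    (fun i => ((pderiv i).toLinearMap : Module.End ℚ (MvPolynomial σ ℚ)) ^ d i)
    fun i _ j _ _ => Commute.pow_pow (pderiv_commute i j) _ _

/-- `P(∂) Q` : the differential operator associated with `P` (substituting `∂/∂zᵢ`
for each variable `zᵢ`) applied to `Q`. -/
def DP {σ : Type*} [DecidableEq σ] (P Q : MvPolynomial σ ℚ) : MvPolynomial σ ℚ :=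
  ∑ d ∈ P.support, P.coeff d • Dmon d Q

/-- `x`-exponents of the biexponents of the hook `(K+1,1^L)`, listed in lexicographic
order: `(0,0),(0,1),…,(0,K),(1,0),(2,0),…,(L,0)`. -/
def hookP (K L : ℕ) (j : Fin (K + L + 1)) : ℕ :=
  if (j : ℕ) ≤ K then 0 else (j : ℕ) - K

/-- `y`-exponents of the biexponents of the hook `(K+1,1^L)`. -/
def hookQ (K L : ℕ) (j : Fin (K + L + 1)) : ℕ :=
  if (j : ℕ) ≤ K then (j : ℕ) else 0

/-- `Δ_μ = det (xᵢ^(p_j) yᵢ^(q_j))` for the hook `μ = (K+1,1^L)` of `n = K+L+1`;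
the variable `Sum.inl i` is `xᵢ` and `Sum.inr i` is `yᵢ`. -/
def Delta (K L : ℕ) : MvPolynomial (Fin (K + L + 1) ⊕ Fin (K + L + 1)) ℚ :=
  Matrix.det fun i j =>
    X (Sum.inl i) ^ hookP K L j * X (Sum.inr i) ^ hookQ K L j


/-- The size (height for a `y`-column, depth for an `x`-column) of the column at
place `i` of a dessin with column types `isY` : the `j`-th `y`-column from the left
has height `K+1-j`, and the `j`-th `x`-column from the left has depth `L+1-j`. -/
def colSize (K L : ℕ) (isY : Fin (K + L) → Bool) (i : Fin (K + L)) : ℕ :=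
  if isY i then K - (Finset.univ.filter fun j => j < i ∧ isY j = true).card
  else L - (Finset.univ.filter fun j => j < i ∧ isY j = false).card

/-- A column is plain ('unie') if it contains only crosses or only blank cells. -/
def Plain (K L : ℕ) (isY : Fin (K + L) → Bool) (cross : Fin (K + L) → ℕ)
    (j : Fin (K + L)) : Prop :=
  cross j = 0 ∨ cross j = colSize K L isY j

/-- A dessin attached to the hook `μ = (K+1,1^L)` : at each of the `K+L` places there
is a `y`-column (`isY i = true`) or an `x`-column (`isY i = false`), with `K` many
`y`-columns; the column at place `i` carries `cross i` crosses, at most its size; and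
for each `y`-column, the leftmost plain `x`-column to its right (if any) dictates:
if it has no crosses the `y`-column has at least one cross, and if it is full of
crosses the `y`-column has at least one blank cell. -/
structure Dessin (K L : ℕ) where
  isY : Fin (K + L) → Bool
  cross : Fin (K + L) → ℕ
  card_isY : (Finset.univ.filter fun i => isY i = true).card = K
  cross_le : ∀ i, cross i ≤ colSize K L isY i
  rule : ∀ i j : Fin (K + L), isY i = true → isY j = false → i < j →
    Plain K L isY cross j →
    (∀ j', i < j' → j' < j → isY j' = false → ¬ Plain K L isY cross j') →
    ((cross j = 0 → 1 ≤ cross i) ∧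
     (cross j = colSize K L isY j → cross i < colSize K L isY i))

/-- The exponent of the derivation operator `∂_D = ∂_{S(D)}` attached to a dessin:
for each cross at place `i`, derive once with respect to `xᵢ` or `yᵢ` according to
the type of the column at place `i`. -/
def Dessin.exp {K L : ℕ} (D : Dessin K L) :
    (Fin (K + L + 1) ⊕ Fin (K + L + 1)) →₀ ℕ :=
  Finsupp.equivFunOnFinite.symm <| Sum.elim
    (fun i : Fin (K + L + 1) => if h : (i : ℕ) < K + L then
      (if D.isY ⟨i, h⟩ then 0 else D.cross ⟨i, h⟩) else 0)
    (fun i : Fin (K + L + 1) => if h : (i : ℕ) < K + L then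
      (if D.isY ⟨i, h⟩ then D.cross ⟨i, h⟩ else 0) else 0)

/-- The exponent of the derivation operator `∂_{T(D)}` attached to the blank cells of
a dessin: for each blank cell at place `i`, derive once with respect to `xᵢ` or `yᵢ`
according to the type of the column at place `i`. -/
def Dessin.blankExp {K L : ℕ} (D : Dessin K L) :
    (Fin (K + L + 1) ⊕ Fin (K + L + 1)) →₀ ℕ :=
  Finsupp.equivFunOnFinite.symm <| Sum.elim
    (fun i : Fin (K + L + 1) => if h : (i : ℕ) < K + L then
      (if D.isY ⟨i, h⟩ then 0 else colSize K L D.isY ⟨i, h⟩ - D.cross ⟨i, h⟩) else 0)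
    (fun i : Fin (K + L + 1) => if h : (i : ℕ) < K + L then
      (if D.isY ⟨i, h⟩ then colSize K L D.isY ⟨i, h⟩ - D.cross ⟨i, h⟩ else 0) else 0)

/-- `D₁` is a son ('fils') of `D` if `D₁ ≠ D` and `∂_{T(D)} ∂_{S(D₁)} Δ_μ` is a
nonzero constant. -/
def Son (K L : ℕ) (D D₁ : Dessin K L) : Prop :=
  D₁ ≠ D ∧ ∃ c : ℚ, c ≠ 0 ∧ Dmon D.blankExp (Dmon D₁.exp (Delta K L)) = C c

/-!
Pair each dessin `D` with the linear form `P ↦ (∂_{T(D)} P)(0)`. The crosses and blanks of `D`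
fill its columns, and a column of height `s` (resp. depth `s`) matches the biexponent `(0, s)`
(resp. `(s, 0)`) of the hook, so `S(D) + T(D)` is the exponent of exactly one monomial of `Δ_μ`:
the diagonal pairing is nonzero. Since `Δ_μ` is homogeneous, a nonzero off-diagonal pairing
`(∂_{T(D)} ∂_{S(D₁)} Δ_μ)(0)` forces `∂_{T(D)} ∂_{S(D₁)} Δ_μ` to be a constant, so `D₁` is a son
of `D`. Without cycles of sons the pairing matrix is triangular along a linear extension of the
descendance order, hence the family is linearly independent.
-/

theorem linearIndependent_of_triangular_pairing {ι R M : Type*} [Finite ι] [CommRing R]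
    [NoZeroDivisors R] [AddCommGroup M] [Module R M] (v : ι → M) (φ : ι → M →ₗ[R] R)
    (hdiag : ∀ i, φ i (v i) ≠ 0)
    (hacyc : ∀ i, ¬ Relation.TransGen (fun i j => j ≠ i ∧ φ i (v j) ≠ 0) i i) :
    LinearIndependent R v := by
  have := Fintype.ofFinite ι
  set r : ι → ι → Prop := fun i j => j ≠ i ∧ φ i (v j) ≠ 0
  have : IsTrans ι (flip (Relation.TransGen r)) := ⟨fun _ _ _ hab hbc => hbc.trans hab⟩
  have : Std.Irrefl (flip (Relation.TransGen r)) := ⟨hacyc⟩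
  have wf : WellFounded (flip (Relation.TransGen r)) := Finite.wellFounded_of_trans_of_irrefl _
  rw [Fintype.linearIndependent_iff]
  intro g hg i
  induction i using wf.induction with
  | _ i ih =>
  have hpair : ∑ j, g j * φ i (v j) = 0 := by simpa using congrArg (φ i) hg
  rw [Finset.sum_eq_single i (fun j _ hji => ?_) (by simp)] at hpair
  · exact (mul_eq_zero.mp hpair).resolve_right (hdiag i)
  · by_cases hij : φ i (v j) = 0
    · rw [hij, mul_zero]
    · rw [ih j (.single ⟨hji, hij⟩), zero_mul]

lemma MvPolynomial.IsHomogeneous.eq_C_coeff_zero {σ R : Type*} [CommSemiring R]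
    {P : MvPolynomial σ R} {n : ℕ} (hP : P.IsHomogeneous n) (h0 : coeff 0 P ≠ 0) :
    P = C (coeff 0 P) := by
  obtain rfl : n = 0 := by simpa using (hP h0).symm
  exact totalDegree_eq_zero_iff_eq_C.mp ((totalDegree_zero_iff_isHomogeneous _).mpr hP)

section Dmon

variable {σ : Type*}

lemma pderiv_pow_monomial (i : σ) (k : ℕ) (m : σ →₀ ℕ) (c : ℚ) :
    (((pderiv i).toLinearMap : Module.End ℚ (MvPolynomial σ ℚ)) ^ k) (monomial m c)
      = monomial (m - Finsupp.single i k) (c * (m i).descFactorial k) := by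
  induction k with
  | zero => simp
  | succ k ih =>
    rw [pow_succ', Module.End.mul_apply, ih]
    change pderiv i _ = _
    rw [pderiv_monomial, tsub_tsub, ← Finsupp.single_add, Finsupp.tsub_apply,
      Finsupp.single_eq_same, Nat.descFactorial_succ, Nat.cast_mul]
    congr 1
    ring

lemma prod_descFactorial_ne_zero_iff {d m : σ →₀ ℕ} :
    (d.prod fun i k => (m i).descFactorial k) ≠ 0 ↔ d ≤ m := by
  simp only [Finsupp.prod, Finset.prod_ne_zero_iff, ne_eq, Nat.descFactorial_eq_zero_iff_lt,
    not_lt, Finsupp.mem_support_iff, Finsupp.le_def]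
  exact forall_congr' fun i => ⟨fun h => (eq_or_ne (d i) 0).elim (fun h0 => h0 ▸ Nat.zero_le _) h,
    fun h _ => h⟩

variable [DecidableEq σ]

lemma noncommProd_pderiv_pow_monomial (s : Finset σ) (d : σ → ℕ)
    (hc : (s : Set σ).Pairwise fun a b => Commute
      (((pderiv a).toLinearMap : Module.End ℚ (MvPolynomial σ ℚ)) ^ d a)
      (((pderiv b).toLinearMap : Module.End ℚ (MvPolynomial σ ℚ)) ^ d b))
    (m : σ →₀ ℕ) (c : ℚ) :
    s.noncommProd (fun i => ((pderiv i).toLinearMap : Module.End ℚ (MvPolynomial σ ℚ)) ^ d i)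
        hc (monomial m c)
      = monomial (m - ∑ i ∈ s, Finsupp.single i (d i))
          (c * ∏ i ∈ s, (m i).descFactorial (d i)) := by
  induction s using Finset.cons_induction with
  | empty => simp
  | cons a s ha ih =>
    rw [Finset.noncommProd_cons, Module.End.mul_apply,
      ih (hc.mono (by simp)), pderiv_pow_monomial, tsub_tsub]
    have hma : (m - ∑ i ∈ s, Finsupp.single i (d i)) a = m a := by
      have : (∑ i ∈ s, Finsupp.single i (d i)) a = 0 := by
        rw [Finset.sum_apply']
        exact Finset.sum_eq_zero fun i hi => Finsupp.single_eq_of_ne (fun h => ha (h ▸ hi))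
      rw [Finsupp.tsub_apply, this, Nat.sub_zero]
    rw [hma, Finset.sum_cons, Finset.prod_cons, add_comm (Finsupp.single a (d a))]
    congr 1
    push_cast
    ring

theorem Dmon_monomial (d m : σ →₀ ℕ) (c : ℚ) :
    Dmon d (monomial m c)
      = monomial (m - d) (c * (d.prod fun i k => (m i).descFactorial k : ℕ)) := by
  have := noncommProd_pderiv_pow_monomial d.support d
    (fun i _ j _ _ => Commute.pow_pow (pderiv_commute i j) _ _) m c
  rwa [← Finsupp.sum, Finsupp.sum_single] at this

theorem coeff_Dmon (d m : σ →₀ ℕ) (P : MvPolynomial σ ℚ) :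
    coeff m (Dmon d P)
      = coeff (m + d) P * (d.prod fun i k => ((m + d) i).descFactorial k : ℕ) := by
  induction P using MvPolynomial.induction_on' with
  | monomial m' c =>
    rw [Dmon_monomial, coeff_monomial, coeff_monomial]
    by_cases hm' : m' = m + d
    · subst hm'
      simp
    · rw [if_neg hm', zero_mul, ite_eq_right_iff]
      rintro rfl
      rw [Nat.cast_eq_zero.mpr (not_ne_iff.mp (mt prod_descFactorial_ne_zero_iff.mp
        fun hle => hm' (tsub_add_cancel_of_le hle).symm)), mul_zero]
  | add P Q hP hQ => rw [map_add, coeff_add, coeff_add, hP, hQ, add_mul]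

theorem isHomogeneous_Dmon {P : MvPolynomial σ ℚ} {n : ℕ} (hP : P.IsHomogeneous n)
    (d : σ →₀ ℕ) : (Dmon d P).IsHomogeneous (n - d.degree) := by
  rw [P.as_sum, map_sum]
  refine IsHomogeneous.sum _ _ _ fun m hm => ?_
  rw [Dmon_monomial]
  by_cases hdm : d ≤ m
  · apply isHomogeneous_monomial
    have hmn : m.degree = n := by
      simpa [Finsupp.degree_eq_weight_one, Pi.one_def] using hP (mem_support_iff.mp hm)
    have := congrArg Finsupp.degree (tsub_add_cancel_of_le hdm)
    rw [map_add] at this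
    omega
  · rw [← prod_descFactorial_ne_zero_iff, not_not] at hdm
    rw [hdm, Nat.cast_zero, mul_zero, monomial_zero]
    exact isHomogeneous_zero _ _ _

end Dmon

section Bialternant

open Equiv

variable {R : Type*} [CommRing R] {n : Type*} [Fintype n]

def biexp (p q : n → ℕ) : (n ⊕ n) →₀ ℕ :=
  Finsupp.equivFunOnFinite.symm (Sum.elim p q)

@[simp] lemma biexp_inl (p q : n → ℕ) (i : n) : biexp p q (Sum.inl i) = p i := rfl

@[simp] lemma biexp_inr (p q : n → ℕ) (i : n) : biexp p q (Sum.inr i) = q i := rfl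

lemma biexp_inj {p q p' q' : n → ℕ} : biexp p q = biexp p' q' ↔ p = p' ∧ q = q' := by
  simp [DFunLike.ext_iff, funext_iff]

lemma degree_biexp (p q : n → ℕ) : (biexp p q).degree = ∑ i, p i + ∑ i, q i := by
  rw [Finsupp.degree_eq_sum, Fintype.sum_sum_type]
  rfl

lemma prod_X_pow_mul_X_pow (p q : n → ℕ) :
    ∏ i, (X (Sum.inl i) ^ p i * X (Sum.inr i) ^ q i : MvPolynomial (n ⊕ n) R)
      = monomial (biexp p q) 1 := by
  rw [monomial_eq, C_1, one_mul, Finsupp.prod_fintype _ _ (fun _ => pow_zero _),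
    Fintype.prod_sum_type, Finset.prod_mul_distrib]
  rfl

variable [DecidableEq n]

variable (R) in
def bialternant (p q : n → ℕ) : MvPolynomial (n ⊕ n) R :=
  Matrix.det fun i j => X (Sum.inl i) ^ p j * X (Sum.inr i) ^ q j

lemma bialternant_eq_sum (p q : n → ℕ) :
    bialternant R p q
      = ∑ σ : Perm n, monomial (biexp (p ∘ σ) (q ∘ σ)) ((Perm.sign σ : ℤ) : R) := by
  refine (Matrix.det_transpose _).symm.trans ((Matrix.det_apply' _).trans ?_)
  refine Finset.sum_congr rfl fun σ _ => ?_
  rw [← mul_one ((Perm.sign σ : ℤ) : R), ← C_mul_monomial, ← prod_X_pow_mul_X_pow, map_intCast]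
  rfl

lemma isHomogeneous_bialternant (p q : n → ℕ) :
    (bialternant R p q).IsHomogeneous (∑ i, p i + ∑ i, q i) := by
  rw [bialternant_eq_sum]
  refine IsHomogeneous.sum _ _ _ fun σ _ => isHomogeneous_monomial _ ?_
  rw [degree_biexp, Function.comp_def, Function.comp_def, Equiv.sum_comp σ p, Equiv.sum_comp σ q]

lemma coeff_biexp_bialternant {p q : n → ℕ} (hpq : Function.Injective fun j => (p j, q j))
    (σ : Perm n) :
    coeff (biexp (p ∘ σ) (q ∘ σ)) (bialternant R p q) = Perm.sign σ := by
  rw [bialternant_eq_sum, coeff_sum, Finset.sum_eq_single σ (fun τ _ hτσ => ?_) (by simp),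
    coeff_monomial, if_pos rfl]
  rw [coeff_monomial, if_neg (mt biexp_inj.mp ?_)]
  rintro ⟨hp, hq⟩
  exact hτσ (Equiv.ext fun i => hpq (Prod.ext (congrFun hp i) (congrFun hq i)))

end Bialternant

lemma hook_injective (K L : ℕ) : Function.Injective fun j => (hookP K L j, hookQ K L j) := by
  intro i i' h
  simp only [Prod.mk.injEq, hookP, hookQ] at h
  ext
  split_ifs at h <;> omega

lemma Delta_eq_bialternant (K L : ℕ) : Delta K L = bialternant ℚ (hookP K L) (hookQ K L) := rfl

lemma isHomogeneous_Delta (K L : ℕ) :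
    (Delta K L).IsHomogeneous (∑ j, hookP K L j + ∑ j, hookQ K L j) :=
  isHomogeneous_bialternant _ _

section CountBelow

variable {α : Type*} [Fintype α] [LinearOrder α] {p : α → Prop} [DecidablePred p]

lemma card_filter_lt_lt_card_filter_lt {i j : α} (hij : i < j) (hi : p i) :
    (Finset.univ.filter fun k => k < i ∧ p k).card
      < (Finset.univ.filter fun k => k < j ∧ p k).card := by
  refine Finset.card_lt_card (Finset.ssubset_iff_of_subset ?_ |>.mpr ⟨i, ?_, ?_⟩)
  · intro k
    simp only [Finset.mem_filter, Finset.mem_univ, true_and]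
    exact fun hk => ⟨hk.1.trans hij, hk.2⟩
  · simp [hij, hi]
  · simp

lemma card_filter_lt_lt_card_filter {i : α} (hi : p i) :
    (Finset.univ.filter fun k => k < i ∧ p k).card < (Finset.univ.filter p).card := by
  refine Finset.card_lt_card (Finset.ssubset_iff_of_subset ?_ |>.mpr ⟨i, ?_, ?_⟩)
  · intro k
    simp only [Finset.mem_filter, Finset.mem_univ, true_and]
    exact And.right
  · simp [hi]
  · simp

end CountBelow

namespace Dessin

variable {K L : ℕ} (D : Dessin K L)

lemma card_isY_false : (Finset.univ.filter fun i => D.isY i = false).card = L := by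
  have := Finset.card_filter_add_card_filter_not (s := Finset.univ) (fun i => D.isY i = true)
  simp only [Bool.not_eq_true, Finset.card_univ, Fintype.card_fin, D.card_isY] at this
  omega

lemma colSize_pos (i : Fin (K + L)) : 0 < colSize K L D.isY i := by
  unfold colSize
  cases hi : D.isY i
  · have := card_filter_lt_lt_card_filter (p := fun j => D.isY j = false) hi
    rw [card_isY_false] at this
    simp only [Bool.false_eq_true, if_false]
    omega
  · have := card_filter_lt_lt_card_filter (p := fun j => D.isY j = true) hi
    rw [D.card_isY] at this
    simp only [if_true]
    omega

lemma colSize_le (i : Fin (K + L)) : colSize K L D.isY i ≤ if D.isY i then K else L := by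
  unfold colSize
  split_ifs <;> omega

lemma cross_lt (i : Fin (K + L)) : D.cross i < K + L + 1 := by
  have := D.cross_le i
  have := D.colSize_le i
  split_ifs at this <;> omega

lemma colSize_lt_colSize {i j : Fin (K + L)} (hij : i < j) (hy : D.isY i = D.isY j) :
    colSize K L D.isY j < colSize K L D.isY i := by
  have hpos := D.colSize_pos j
  unfold colSize at hpos ⊢
  rw [← hy] at hpos ⊢
  cases hb : D.isY i
  · have := card_filter_lt_lt_card_filter_lt (p := fun k => D.isY k = false) hij hb
    simp only [hb, Bool.false_eq_true, if_false] at hpos ⊢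
    omega
  · have := card_filter_lt_lt_card_filter_lt (p := fun k => D.isY k = true) hij hb
    simp only [hb, if_true] at hpos ⊢
    omega

/-- The index in the hook of the biexponent filling the column at place `j`: a `y`-column of
height `s` matches `(0, s)`, at index `s`; an `x`-column of depth `s` matches `(s, 0)`, at
index `K + s`; the place `K + L`, which carries no column, matches `(0, 0)`. -/
def biexpIndex (j : Fin (K + L + 1)) : ℕ :=
  if h : (j : ℕ) < K + L then
    (if D.isY ⟨j, h⟩ then colSize K L D.isY ⟨j, h⟩ else K + colSize K L D.isY ⟨j, h⟩)
  else 0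

lemma biexpIndex_lt (j : Fin (K + L + 1)) : D.biexpIndex j < K + L + 1 := by
  unfold biexpIndex
  split_ifs with h hy
  · have := D.colSize_le ⟨j, h⟩
    rw [if_pos hy] at this
    omega
  · have := D.colSize_le ⟨j, h⟩
    rw [if_neg hy] at this
    omega
  · omega

lemma biexpIndex_injective : Function.Injective D.biexpIndex := by
  suffices ∀ j j', j < j' → D.biexpIndex j ≠ D.biexpIndex j' by
    intro j j' h
    by_contra hne
    rcases lt_or_gt_of_ne hne with hlt | hlt
    exacts [this _ _ hlt h, this _ _ hlt h.symm]
  intro j j' hjj'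
  have hj : (j : ℕ) < K + L := by omega
  have hpos := D.colSize_pos ⟨j, hj⟩
  have hle := D.colSize_le ⟨j, hj⟩
  unfold biexpIndex
  rw [dif_pos hj]
  by_cases hj' : (j' : ℕ) < K + L
  · rw [dif_pos hj']
    have hpos' := D.colSize_pos ⟨j', hj'⟩
    have hle' := D.colSize_le ⟨j', hj'⟩
    by_cases hy : D.isY ⟨j, hj⟩ = D.isY ⟨j', hj'⟩
    · have := D.colSize_lt_colSize (show (⟨j, hj⟩ : Fin (K + L)) < ⟨j', hj'⟩ from hjj') hy
      rw [← hy]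
      split_ifs <;> omega
    · cases hb : D.isY ⟨j, hj⟩ <;> cases hb' : D.isY ⟨j', hj'⟩ <;>
        simp_all <;> omega
  · rw [dif_neg hj']
    split_ifs <;> omega

def biexpPerm : Equiv.Perm (Fin (K + L + 1)) :=
  Equiv.ofBijective (fun j => ⟨D.biexpIndex j, D.biexpIndex_lt j⟩)
    (Finite.injective_iff_bijective.mp fun _ _ h => D.biexpIndex_injective (congrArg Fin.val h))

lemma biexp_hook_biexpPerm :
    biexp (hookP K L ∘ D.biexpPerm) (hookQ K L ∘ D.biexpPerm) = D.exp + D.blankExp := by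
  ext (j | j) <;> by_cases h : (j : ℕ) < K + L <;>
    simp only [biexp_inl, biexp_inr, Function.comp_apply, biexpPerm, Equiv.ofBijective_apply,
      Finsupp.add_apply, Dessin.exp, Dessin.blankExp, Finsupp.coe_equivFunOnFinite_symm,
      Sum.elim_inl, Sum.elim_inr, hookP, hookQ, biexpIndex, h, ↓reduceDIte, zero_le, ↓reduceIte,
      add_zero]
  all_goals
    have := D.cross_le ⟨j, h⟩
    have := D.colSize_pos ⟨j, h⟩
    have := D.colSize_le ⟨j, h⟩
    split_ifs at * <;> omega

instance : Finite (Dessin K L) :=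
  Finite.of_injective
    (fun E : Dessin K L => (E.isY, fun i => (⟨E.cross i, E.cross_lt i⟩ : Fin (K + L + 1))))
    (by
      rintro ⟨isY, cross, _, _, _⟩ ⟨isY', cross', _, _, _⟩ h
      simp only [Prod.mk.injEq, funext_iff, Fin.mk.injEq] at h
      obtain rfl : isY = isY' := funext h.1
      obtain rfl : cross = cross' := funext h.2
      rfl)

theorem coeff_zero_Dmon_blankExp_Dmon_exp_ne_zero :
    coeff 0 (Dmon D.blankExp (Dmon D.exp (Delta K L))) ≠ 0 := by
  have hcoeff : coeff (D.exp + D.blankExp) (Delta K L) ≠ 0 := by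
    rw [← D.biexp_hook_biexpPerm, Delta_eq_bialternant,
      coeff_biexp_bialternant (hook_injective K L)]
    exact Int.cast_ne_zero.mpr (Units.ne_zero _)
  rw [coeff_Dmon, coeff_Dmon, zero_add, add_comm D.blankExp]
  refine mul_ne_zero (mul_ne_zero hcoeff ?_) ?_ <;>
    rw [Nat.cast_ne_zero, prod_descFactorial_ne_zero_iff]
  exact le_self_add

variable {D} in
theorem son_of_coeff_zero_ne_zero {D₁ : Dessin K L} (hne : D₁ ≠ D)
    (h : coeff 0 (Dmon D.blankExp (Dmon D₁.exp (Delta K L))) ≠ 0) : Son K L D D₁ :=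
  ⟨hne, _, h,
    (isHomogeneous_Dmon (isHomogeneous_Dmon (isHomogeneous_Delta K L) _) _).eq_C_coeff_zero h⟩

end Dessin

/-- Lemma 1: if no dessin is its own descendant (descendance being the transitive
closure of the son relation), then the family `{∂_{S(D)} Δ_μ : D ∈ 𝒟}` is linearly
independent over `ℚ`. -/
theorem stmt13 (K L : ℕ)
    (h : ∀ D : Dessin K L, ¬ Relation.TransGen (Son K L) D D) :
    LinearIndependent ℚ (fun D : Dessin K L => Dmon D.exp (Delta K L)) :=
  linearIndependent_of_triangular_pairing _ (fun D => lcoeff ℚ 0 ∘ₗ Dmon D.blankExp)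
    Dessin.coeff_zero_Dmon_blankExp_Dmon_exp_ne_zero fun D hD =>
      h D (Relation.TransGen.mono (fun _ _ hr => Dessin.son_of_coeff_zero_ne_zero hr.1 hr.2) _ _ hD)
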